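/- The partial derivative of the dual function D(μ) = f(μ) + g(μ) with respect to μ_j, at any μ where the user-side maximizer x(μ) is unique, equals K_j(μ) − ∑_i x_{ij}(μ), where K_j(μ) = min{N_U, e^{μ_j − 1}} and x_{ij}(μ) is the indicator that j uniquely maximizes log c_{ij} − μ_j. -/

import Mathlib

open Finset Filter Topology Asymptotics Real

/-! Near `μ` every user keeps its strict maximizer `jstar i`, so `f` coincides with a sum of
affine functions of `μ_j`. Each summand of `g` is `sup_{0 < k ≤ N} (k u - k log k)`, attained at
the continuous maximizer `min(N, e^{u-1})`; by the envelope argument its derivative is the value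
of the maximizer. -/

theorem hasDerivAt_iSup_of_forall_lt {ι : Type*} [Finite ι] {f : ι → ℝ → ℝ} {i₀ : ι} {f' x : ℝ}
    (hf : ∀ i ≠ i₀, ContinuousAt (f i) x) (hlt : ∀ i ≠ i₀, f i x < f i₀ x)
    (hd : HasDerivAt (f i₀) f' x) : HasDerivAt (fun t => ⨆ i, f i t) f' x := by
  have hev : ∀ᶠ t in 𝓝 x, ∀ i ≠ i₀, f i t < f i₀ t :=
    eventually_all.2 fun i => eventually_imp_distrib_left.2 fun hi =>
      (hf i hi).eventually_lt hd.continuousAt (hlt i hi)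
  refine hd.congr_of_eventuallyEq ?_
  filter_upwards [hev] with t ht
  have : Nonempty ι := ⟨i₀⟩
  refine le_antisymm (ciSup_le fun i => ?_) (le_ciSup (Set.finite_range (f · t)).bddAbove i₀)
  rcases eq_or_ne i i₀ with rfl | hi
  exacts [le_rfl, (ht i hi).le]

theorem hasDerivAt_conjugate_of_continuousAt_maximizer {h k : ℝ → ℝ} {u₀ : ℝ}
    (hk : ContinuousAt k u₀) (hmax : ∀ u v, k v * u - h (k v) ≤ k u * u - h (k u)) :
    HasDerivAt (fun u => k u * u - h (k u)) (k u₀) u₀ := by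
  rw [hasDerivAt_iff_isLittleO]
  have hsmall : (fun u => (k u - k u₀) * (u - u₀)) =o[𝓝 u₀] fun u => u - u₀ := by
    have hk0 : (fun u => k u - k u₀) =o[𝓝 u₀] fun _ => (1 : ℝ) :=
      (isLittleO_one_iff ℝ).2 (by simpa using hk.tendsto.sub_const (k u₀))
    simpa using hk0.mul_isBigO (isBigO_refl (fun u => u - u₀) _)
  refine IsBigO.trans_isLittleO (IsBigO.of_bound 1 (Eventually.of_forall fun u => ?_)) hsmall
  -- comparing each of `k u`, `k u₀` with the maximizer at the other point squeezes the
  -- remainder between `0` and `(k u - k u₀) * (u - u₀)`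
  have hlo := hmax u u₀
  have hhi := hmax u₀ u
  rw [one_mul, Real.norm_eq_abs, Real.norm_eq_abs, smul_eq_mul]
  refine abs_le_abs_of_nonneg (by linarith) ?_
  linarith

theorem mul_log_add_tangent_le {k m : ℝ} (hk : 0 < k) (hm : 0 < m) :
    m * log m + (log m + 1) * (k - m) ≤ k * log k := by
  have h := log_le_sub_one_of_pos (div_pos hm hk)
  rw [log_div hm.ne' hk.ne', le_sub_iff_add_le, le_div_iff₀ hk] at h
  linarith

theorem mul_sub_log_le_of_mem_Ioc {N u k : ℝ} (hN : 0 < N) (hk : k ∈ Set.Ioc 0 N) :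
    k * (u - log k) ≤ min N (exp (u - 1)) * (u - log (min N (exp (u - 1)))) := by
  set m := min N (exp (u - 1))
  have htangent := mul_log_add_tangent_le hk.1 (lt_min hN (exp_pos (u - 1)) : 0 < m)
  have hsign : (u - log m - 1) * (k - m) ≤ 0 := by
    rcases le_total (exp (u - 1)) N with hle | hle
    · rw [show m = exp (u - 1) from min_eq_right hle, log_exp]
      simp
    · have hlog : log N ≤ u - 1 := by simpa using log_le_log hN hle
      rw [show m = N from min_eq_left hle]
      exact mul_nonpos_of_nonneg_of_nonpos (by linarith) (by linarith [hk.2])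
  linarith

theorem ciSup_Ioc_mul_sub_log {N : ℝ} (hN : 0 < N) (u : ℝ) :
    ⨆ k : Set.Ioc 0 N, (k : ℝ) * (u - log k) =
      min N (exp (u - 1)) * (u - log (min N (exp (u - 1)))) := by
  have hmem : min N (exp (u - 1)) ∈ Set.Ioc 0 N := ⟨lt_min hN (exp_pos _), min_le_left _ _⟩
  have : Nonempty (Set.Ioc 0 N) := ⟨⟨_, hmem⟩⟩
  refine le_antisymm (ciSup_le fun k => mul_sub_log_le_of_mem_Ioc hN k.2) ?_
  exact le_ciSup_of_le ⟨_, Set.forall_mem_range.2 fun k => mul_sub_log_le_of_mem_Ioc hN k.2⟩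
    ⟨_, hmem⟩ le_rfl

theorem hasDerivAt_iSup_Ioc_mul_sub_log {N : ℝ} (hN : 0 < N) (u₀ : ℝ) :
    HasDerivAt (fun u => ⨆ k : Set.Ioc 0 N, (k : ℝ) * (u - log k)) (min N (exp (u₀ - 1))) u₀ := by
  have hmem (u : ℝ) : min N (exp (u - 1)) ∈ Set.Ioc 0 N :=
    ⟨lt_min hN (exp_pos _), min_le_left _ _⟩
  have hconj := hasDerivAt_conjugate_of_continuousAt_maximizer (h := fun k => k * log k)
    (k := fun u => min N (exp (u - 1))) (u₀ := u₀) (by fun_prop)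
    (fun u v => by simpa only [mul_sub] using mul_sub_log_le_of_mem_Ioc (u := u) hN (hmem v))
  refine hconj.congr_of_eventuallyEq (Eventually.of_forall fun u => ?_)
  dsimp only
  rw [ciSup_Ioc_mul_sub_log hN]
  ring

theorem dual_partial_derivative_general
    (U B : Type*) [Fintype U] [Fintype B] [Nonempty U] [DecidableEq B]
    (c : U → B → ℝ) (μ : B → ℝ) (j : B)
    (jstar : U → B)
    (huniq : ∀ i j', j' ≠ jstar i →
      Real.log (c i j') - μ j' < Real.log (c i (jstar i)) - μ (jstar i)) :
    HasDerivAt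
      (fun t : ℝ =>
        (∑ i, ⨆ j', (Real.log (c i j') - Function.update μ j t j')) +
        ∑ j', ⨆ k : Set.Ioc (0 : ℝ) (Fintype.card U : ℝ),
          (k : ℝ) * (Function.update μ j t j' - Real.log (k : ℝ)))
      (min (Fintype.card U : ℝ) (Real.exp (μ j - 1)) -
        ∑ i, (if jstar i = j then (1 : ℝ) else 0))
      (μ j) := by
  have hN : (0 : ℝ) < Fintype.card U := Nat.cast_pos.2 Fintype.card_pos
  have hupdate (j' : B) :
      HasDerivAt (fun t => Function.update μ j t j') (if j' = j then 1 else 0) (μ j) := by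
    simpa [Pi.single_apply] using hasDerivAt_pi.1 (hasDerivAt_update μ j (μ j)) j'
  have hf := HasDerivAt.fun_sum (u := univ) fun i _ =>
    hasDerivAt_iSup_of_forall_lt (f := fun j' t => Real.log (c i j') - Function.update μ j t j')
      (fun j' _ => (hupdate j').continuousAt.const_sub _)
      (by simpa only [Function.update_eq_self] using huniq i)
      ((hupdate (jstar i)).const_sub _)
  have hg := HasDerivAt.fun_sum (u := univ) fun j' _ =>
    (hasDerivAt_iSup_Ioc_mul_sub_log hN (Function.update μ j (μ j) j')).comp (μ j) (hupdate j')
  refine (hf.add hg).congr_deriv ?_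
  simp only [Function.update_eq_self, mul_ite, mul_one, mul_zero, sum_ite_eq', mem_univ,
    if_true, sum_neg_distrib]
  ring

theorem dual_partial_derivative
    (U B : Type*) [Fintype U] [Fintype B] [Nonempty U] [Nonempty B] [DecidableEq B]
    (c : U → B → ℝ) (hc : ∀ i j, 0 < c i j) (μ : B → ℝ) (j : B)
    (jstar : U → B)
    (huniq : ∀ i j', j' ≠ jstar i →
      Real.log (c i j') - μ j' < Real.log (c i (jstar i)) - μ (jstar i)) :
    HasDerivAt
      (fun t : ℝ =>
        (∑ i, ⨆ j', (Real.log (c i j') - Function.update μ j t j')) +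
        ∑ j', ⨆ k : Set.Ioc (0 : ℝ) (Fintype.card U : ℝ),
          (k : ℝ) * (Function.update μ j t j' - Real.log (k : ℝ)))
      (min (Fintype.card U : ℝ) (Real.exp (μ j - 1)) -
        ∑ i, (if jstar i = j then (1 : ℝ) else 0))
      (μ j) :=
  dual_partial_derivative_general U B c μ j jstar huniq
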